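/- Let a > 0, β > −1, γ ∈ ℝ with γ ≠ −1, y ∉ [−a,a], and f ∈ C²[−a,a]. For N ∈ ℕ with N ≥ 1, set h = a/N and x_t = t·h for real t, and define E_N = ∫_{−a}^{a} |x|^β |x−y|^γ f(x) dx − (1/h) ∑_{n=−N}^{N−1} ((sgn(x_{n+1})·|x_{n+1}|^{β+1} − sgn(x_n)·|x_n|^{β+1})/(β+1)) · ((sgn(x_{n+1}−y)·|x_{n+1}−y|^{γ+1} − sgn(x_n−y)·|x_n−y|^{γ+1})/(γ+1)) · f(x_{n+1/2}). Then there exists K > 0 such that for all N ≥ 1, |E_N| ≤ K/N². -/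

import Mathlib

open Filter MeasureTheory Set

/-- The quadrature error `E_N` for `∫_{−a}^{a} |x|^β |x−y|^γ f(x) dx`, with `h = a/N` and
`x_t = t·h`, where both singular factors are integrated exactly on each subinterval and
`f` is evaluated at the midpoints. -/
noncomputable def quadErrorSym (a β γ y : ℝ) (f : ℝ → ℝ) (N : ℕ) : ℝ :=
  (∫ x in (-a)..a, |x| ^ β * |x - y| ^ γ * f x) -
    (1 / (a / N)) *
      ∑ n ∈ Finset.Icc (-(N : ℤ)) ((N : ℤ) - 1),
        ((Real.sign (((n : ℝ) + 1) * (a / N)) * |((n : ℝ) + 1) * (a / N)| ^ (β + 1) -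
            Real.sign ((n : ℝ) * (a / N)) * |(n : ℝ) * (a / N)| ^ (β + 1)) / (β + 1)) *
        ((Real.sign (((n : ℝ) + 1) * (a / N) - y) * |((n : ℝ) + 1) * (a / N) - y| ^ (γ + 1) -
            Real.sign ((n : ℝ) * (a / N) - y) * |(n : ℝ) * (a / N) - y| ^ (γ + 1)) / (γ + 1)) *
        f (((n : ℝ) + 1 / 2) * (a / N))

/-!
Split `[-a, a]` into the cells `±[kh, (k+1)h]` and pair each cell with its mirror image. As `|x|^β`
is even, the pair contributes `∫_{kh}^{(k+1)h} x^β G` with `G x = g x + g (-x)`, `g = |· - y|^γ f`,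
which the rule replaces by `(∫ x^β) G(m)` at the midpoint `m`, up to an `O(h²)` midpoint-rule error
for the smooth factor `|· - y|^γ`. Expanding `G` around `m`, the second-order remainder costs
`O(h² ∫ x^β)`. The first-order term `G'(m) ∫ x^β (x - m)` is where the pairing pays off:
`G'(m) = g'(m) - g'(-m) = O(m)`, and
`m ∫ x^β (x - m) = ∫ (x^(β+1) - m^(β+1)) (x - m) - ∫ x^β (x - m)²`
is `O(h² ((k+1)h)^(β+1) - h² (kh)^(β+1))` because `x^(β+1)` is increasing. The cell bounds
telescope to `O(h² a^(β+1)) = O(1/N²)`.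
-/

open intervalIntegral
open scoped NNReal Interval

section Taylor

lemma abs_sub_sub_mul_le_of_lipschitzOnWith {s : Set ℝ} (hs : Convex ℝ s) {g g' : ℝ → ℝ}
    {K : ℝ≥0} (hg : ∀ x ∈ s, HasDerivWithinAt g (g' x) s x) (hK : LipschitzOnWith K g' s)
    {m x : ℝ} (hm : m ∈ s) (hx : x ∈ s) :
    |g x - g m - g' m * (x - m)| ≤ K * (x - m) ^ 2 := by
  have hseg : uIcc m x ⊆ s := by rw [← segment_eq_uIcc]; exact hs.segment_subset hm hx
  have hderiv : ∀ t ∈ uIcc m x,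
      HasDerivWithinAt (fun t => g t - g' m * t) (g' t - g' m) (uIcc m x) t := fun t ht =>
    ((hg t (hseg ht)).mono hseg).sub ((hasDerivWithinAt_id t _).const_mul (g' m))
      |>.congr_deriv (by ring)
  have hbound : ∀ t ∈ uIcc m x, ‖g' t - g' m‖ ≤ K * |x - m| := fun t ht => by
    rw [Real.norm_eq_abs, ← Real.dist_eq]
    refine (hK.dist_le_mul t (hseg ht) m hm).trans ?_
    rw [Real.dist_eq]
    exact mul_le_mul_of_nonneg_left (abs_sub_left_of_mem_uIcc ht) K.2
  have := (convex_uIcc m x).norm_image_sub_le_of_norm_hasDerivWithin_le hderiv hbound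
    left_mem_uIcc right_mem_uIcc
  rw [Real.norm_eq_abs, Real.norm_eq_abs, mul_assoc, ← abs_mul, abs_mul_self, ← sq] at this
  calc |g x - g m - g' m * (x - m)| = |g x - g' m * x - (g m - g' m * m)| := by ring_nf
    _ ≤ K * (x - m) ^ 2 := this

lemma abs_add_comp_neg_sub_sub_mul_le_of_lipschitzOnWith {s : Set ℝ} (hs : Convex ℝ s)
    {g g' : ℝ → ℝ} {K : ℝ≥0} (hg : ∀ x ∈ s, HasDerivWithinAt g (g' x) s x)
    (hK : LipschitzOnWith K g' s) {m x : ℝ} (hm : m ∈ s) (hm' : -m ∈ s) (hx : x ∈ s)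
    (hx' : -x ∈ s) :
    |(g x + g (-x)) - (g m + g (-m)) - (g' m - g' (-m)) * (x - m)| ≤ 2 * K * (x - m) ^ 2 := by
  have h₁ := abs_sub_sub_mul_le_of_lipschitzOnWith hs hg hK hm hx
  have h₂ := abs_sub_sub_mul_le_of_lipschitzOnWith hs hg hK hm' hx'
  calc _ = |(g x - g m - g' m * (x - m)) + (g (-x) - g (-m) - g' (-m) * (-x - -m))| := by
        ring_nf
    _ ≤ K * (x - m) ^ 2 + K * (-x - -m) ^ 2 := (abs_add_le _ _).trans (add_le_add h₁ h₂)
    _ = _ := by ring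

lemma ContDiffOn.exists_lipschitzOnWith_derivWithin_Icc {c d : ℝ} (hcd : c < d) {g : ℝ → ℝ}
    (hg : ContDiffOn ℝ 2 g (Icc c d)) :
    ∃ K, LipschitzOnWith K (derivWithin g (Icc c d)) (Icc c d) :=
  (hg.derivWithin (uniqueDiffOn_Icc hcd) (by norm_num : (1 : WithTop ℕ∞) + 1 ≤ 2))
    |>.exists_lipschitzOnWith one_ne_zero (convex_Icc c d) isCompact_Icc

lemma contDiffOn_abs_sub_rpow {γ y : ℝ} {s : Set ℝ} (hy : y ∉ s) {n : ℕ∞} :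
    ContDiffOn ℝ n (fun x => |x - y| ^ γ) s := fun x hx => by
  have hxy : x - y ≠ 0 := sub_ne_zero.2 fun h => hy (h ▸ hx)
  have habs : ContDiffAt ℝ n (fun x => |x - y|) x :=
    (contDiffAt_abs hxy).comp x (contDiffAt_id.sub contDiffAt_const)
  exact (habs.rpow_const_of_ne (abs_ne_zero.2 hxy)).contDiffWithinAt

end Taylor

section Midpoint

variable {u v : ℝ}

lemma integral_sub_midpoint (u v : ℝ) : ∫ x in u..v, (x - (u + v) / 2) = 0 := by
  rw [intervalIntegral.integral_sub intervalIntegrable_id intervalIntegrable_const, integral_id,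
    intervalIntegral.integral_const, smul_eq_mul]
  ring

lemma abs_integral_mul_taylor_remainder_le {ρ G : ℝ → ℝ} {G' L : ℝ} (huv : u ≤ v)
    (hρ : ∀ x ∈ Icc u v, 0 ≤ ρ x) (hρi : IntervalIntegrable ρ volume u v)
    (hG : ContinuousOn G (Icc u v))
    (htaylor : ∀ x ∈ Icc u v,
      |G x - G ((u + v) / 2) - G' * (x - (u + v) / 2)| ≤ L * (x - (u + v) / 2) ^ 2)
    (hL : 0 ≤ L) :
    |∫ x in u..v, ρ x * (G x - G ((u + v) / 2) - G' * (x - (u + v) / 2))| ≤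
      L * (v - u) ^ 2 / 4 * ∫ x in u..v, ρ x := by
  have hint : IntervalIntegrable
      (fun x => ρ x * (G x - G ((u + v) / 2) - G' * (x - (u + v) / 2))) volume u v := by
    refine hρi.mul_continuousOn (((hG.sub continuousOn_const).sub ?_).mono ?_)
    · fun_prop
    · rw [uIcc_of_le huv]
  rw [← intervalIntegral.integral_const_mul]
  refine (abs_integral_le_integral_abs huv).trans
    (integral_mono_on huv hint.abs (hρi.const_mul _) fun x hx => ?_)
  have hdist : (x - (u + v) / 2) ^ 2 ≤ (v - u) ^ 2 / 4 := by nlinarith [hx.1, hx.2]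
  rw [abs_mul, abs_of_nonneg (hρ x hx), mul_comm]
  exact mul_le_mul_of_nonneg_right ((htaylor x hx).trans (by nlinarith)) (hρ x hx)

lemma abs_integral_sub_mul_midpoint_le {G : ℝ → ℝ} {G' L : ℝ} (huv : u ≤ v)
    (hG : ContinuousOn G (Icc u v))
    (htaylor : ∀ x ∈ Icc u v,
      |G x - G ((u + v) / 2) - G' * (x - (u + v) / 2)| ≤ L * (x - (u + v) / 2) ^ 2)
    (hL : 0 ≤ L) :
    |(∫ x in u..v, G x) - (v - u) * G ((u + v) / 2)| ≤ L * (v - u) ^ 3 / 4 := by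
  have h := abs_integral_mul_taylor_remainder_le huv (fun _ _ => zero_le_one)
    intervalIntegrable_const hG htaylor hL
  have hGi : IntervalIntegrable G volume u v :=
    (hG.mono (uIcc_of_le huv).subset).intervalIntegrable
  have hlin : IntervalIntegrable (fun x => G' * (x - (u + v) / 2)) volume u v :=
    (continuous_const.mul (continuous_id.sub continuous_const)).intervalIntegrable u v
  simp only [one_mul, intervalIntegral.integral_const, smul_eq_mul] at h
  rw [intervalIntegral.integral_sub (hGi.sub intervalIntegrable_const) hlin,
    intervalIntegral.integral_sub hGi intervalIntegrable_const,
    intervalIntegral.integral_const_mul, integral_sub_midpoint, intervalIntegral.integral_const,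
    smul_eq_mul] at h
  convert h using 2 <;> ring

lemma abs_sub_average_le_of_lipschitzOnWith {c d : ℝ} {w w' : ℝ → ℝ} {K : ℝ≥0}
    (hw : ∀ x ∈ Icc c d, HasDerivWithinAt w (w' x) (Icc c d) x)
    (hK : LipschitzOnWith K w' (Icc c d)) (hu : c ≤ u) (huv : u < v) (hv : v ≤ d) :
    |w ((u + v) / 2) - (∫ x in u..v, w x) / (v - u)| ≤ K * (v - u) ^ 2 / 4 := by
  have hsub : Icc u v ⊆ Icc c d := Icc_subset_Icc hu hv
  have hmid := abs_integral_sub_mul_midpoint_le huv.le (G' := w' ((u + v) / 2))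
    (fun x hx => (hw x (hsub hx)).continuousWithinAt.mono hsub)
    (fun x hx => abs_sub_sub_mul_le_of_lipschitzOnWith (convex_Icc c d) hw hK
      (hsub ⟨by linarith, by linarith⟩) (hsub hx)) K.2
  have hvu : 0 < v - u := sub_pos.2 huv
  rw [abs_sub_comm, ← mul_div_cancel_left₀ (w ((u + v) / 2)) hvu.ne', ← sub_div, abs_div,
    abs_of_pos hvu, div_le_iff₀ hvu]
  linarith

variable {β : ℝ}

lemma intervalIntegrable_rpow_mul (hβ : -1 < β) (huv : u ≤ v) {F : ℝ → ℝ}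
    (hF : ContinuousOn F (Icc u v)) : IntervalIntegrable (fun x => x ^ β * F x) volume u v :=
  (intervalIntegrable_rpow' hβ).mul_continuousOn (by rwa [uIcc_of_le huv])

lemma MonotoneOn.abs_integral_sub_mul_sub_midpoint_le {φ : ℝ → ℝ} (hφ : MonotoneOn φ (Icc u v))
    (huv : u ≤ v) :
    |∫ x in u..v, (φ x - φ ((u + v) / 2)) * (x - (u + v) / 2)| ≤
      (φ v - φ u) * (v - u) ^ 2 / 2 := by
  have hm : (u + v) / 2 ∈ Icc u v := ⟨by linarith, by linarith⟩
  have hbd : ∀ x ∈ uIoc u v, ‖(φ x - φ ((u + v) / 2)) * (x - (u + v) / 2)‖ ≤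
      (φ v - φ u) * ((v - u) / 2) := by
    intro x hx
    rw [uIoc_of_le huv] at hx
    have hx' : x ∈ Icc u v := ⟨hx.1.le, hx.2⟩
    have hleft := hφ ⟨le_rfl, huv⟩
    rw [Real.norm_eq_abs, abs_mul]
    refine mul_le_mul (abs_sub_le_iff.2 ⟨?_, ?_⟩) (abs_le.2 ⟨?_, ?_⟩) (abs_nonneg _) ?_
    · linarith [hφ hx' ⟨huv, le_rfl⟩ hx'.2, hφ ⟨le_rfl, huv⟩ hm hm.1]
    · linarith [hφ hm ⟨huv, le_rfl⟩ hm.2, hφ ⟨le_rfl, huv⟩ hx' hx'.1]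
    · linarith [hx.1]
    · linarith [hx.2]
    · linarith [hφ ⟨le_rfl, huv⟩ ⟨huv, le_rfl⟩ huv]
  calc _ ≤ (φ v - φ u) * ((v - u) / 2) * |v - u| := norm_integral_le_of_norm_le_const hbd
    _ = _ := by rw [abs_of_nonneg (sub_nonneg.2 huv)]; ring

lemma midpoint_mul_abs_integral_rpow_mul_sub_le (hβ : -1 < β) (hu : 0 ≤ u) (huv : u ≤ v) :
    (u + v) / 2 * |∫ x in u..v, x ^ β * (x - (u + v) / 2)| ≤
      (v - u) ^ 2 * (2 + 1 / (β + 1)) / 4 * (v ^ (β + 1) - u ^ (β + 1)) := by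
  set m := (u + v) / 2 with hm
  have hβ1 : 0 < β + 1 := by linarith
  have hρ : ∀ x ∈ Icc u v, 0 ≤ x ^ β := fun x hx => Real.rpow_nonneg (hu.trans hx.1) β
  have hlin : ContinuousOn (fun x : ℝ => x - m) (Icc u v) := by fun_prop
  have hsq : ContinuousOn (fun x : ℝ => (x - m) ^ 2) (Icc u v) := by fun_prop
  have hsplit : m * ∫ x in u..v, x ^ β * (x - m) =
      (∫ x in u..v, (x ^ (β + 1) - m ^ (β + 1)) * (x - m)) -
        ∫ x in u..v, x ^ β * (x - m) ^ 2 := by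
    have hpt : ∀ x ∈ uIcc u v, (x ^ (β + 1) - m ^ (β + 1)) * (x - m) =
        x ^ β * (x - m) ^ 2 + m * (x ^ β * (x - m)) - m ^ (β + 1) * (x - m) := by
      intro x hx
      rw [uIcc_of_le huv] at hx
      rw [Real.rpow_add_one' (hu.trans hx.1) hβ1.ne']
      ring
    rw [integral_congr hpt, intervalIntegral.integral_sub, intervalIntegral.integral_add,
      intervalIntegral.integral_const_mul, intervalIntegral.integral_const_mul, hm,
      integral_sub_midpoint]
    · ring
    · exact intervalIntegrable_rpow_mul hβ huv hsq
    · exact (intervalIntegrable_rpow_mul hβ huv hlin).const_mul m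
    · exact (intervalIntegrable_rpow_mul hβ huv hsq).add
        ((intervalIntegrable_rpow_mul hβ huv hlin).const_mul m)
    · exact (continuous_const.mul (continuous_id.sub continuous_const)).intervalIntegrable u v
  have hmono := MonotoneOn.abs_integral_sub_mul_sub_midpoint_le (φ := fun x => x ^ (β + 1))
    (fun s hs t _ hst => Real.rpow_le_rpow (hu.trans hs.1) hst hβ1.le) huv
  have hquad : |∫ x in u..v, x ^ β * (x - m) ^ 2| ≤
      (v - u) ^ 2 / 4 * ((v ^ (β + 1) - u ^ (β + 1)) / (β + 1)) := by
    rw [← integral_rpow (Or.inl hβ), ← intervalIntegral.integral_const_mul]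
    refine (abs_integral_le_integral_abs huv).trans (integral_mono_on huv
      (intervalIntegrable_rpow_mul hβ huv hsq).abs
      ((intervalIntegrable_rpow' hβ).const_mul _) fun x hx => ?_)
    rw [abs_mul, abs_of_nonneg (hρ x hx), abs_of_nonneg (sq_nonneg _), mul_comm]
    exact mul_le_mul_of_nonneg_right (by nlinarith [hx.1, hx.2]) (hρ x hx)
  calc m * |∫ x in u..v, x ^ β * (x - m)| = |m * ∫ x in u..v, x ^ β * (x - m)| := by
        rw [abs_mul, abs_of_nonneg (by linarith : 0 ≤ m)]
    _ ≤ (v ^ (β + 1) - u ^ (β + 1)) * (v - u) ^ 2 / 2 +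
        (v - u) ^ 2 / 4 * ((v ^ (β + 1) - u ^ (β + 1)) / (β + 1)) :=
      hsplit ▸ (abs_sub _ _).trans (add_le_add hmono hquad)
    _ = _ := by field_simp; ring

lemma abs_integral_rpow_mul_sub_le (hβ : -1 < β) (hu : 0 ≤ u) (huv : u ≤ v) {G : ℝ → ℝ}
    {G' L : ℝ} (hG : ContinuousOn G (Icc u v))
    (htaylor : ∀ x ∈ Icc u v,
      |G x - G ((u + v) / 2) - G' * (x - (u + v) / 2)| ≤ L * (x - (u + v) / 2) ^ 2)
    (hG' : |G'| ≤ L * ((u + v) / 2)) (hL : 0 ≤ L) :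
    |(∫ x in u..v, x ^ β * G x) - (∫ x in u..v, x ^ β) * G ((u + v) / 2)| ≤
      L * (v - u) ^ 2 * (1 + 1 / (β + 1)) / 2 * (v ^ (β + 1) - u ^ (β + 1)) := by
  set m := (u + v) / 2
  have hβ1 : 0 < β + 1 := by linarith
  have hlin : ContinuousOn (fun x : ℝ => x - m) (Icc u v) := by fun_prop
  have hrem : ContinuousOn (fun x => G x - G m - G' * (x - m)) (Icc u v) :=
    (hG.sub continuousOn_const).sub (continuousOn_const.mul hlin)
  have hsplit : (∫ x in u..v, x ^ β * G x) - (∫ x in u..v, x ^ β) * G m =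
      (∫ x in u..v, x ^ β * (G x - G m - G' * (x - m))) +
        G' * ∫ x in u..v, x ^ β * (x - m) := by
    have hpt : ∀ x, x ^ β * G x =
        x ^ β * (G x - G m - G' * (x - m)) + G' * (x ^ β * (x - m)) + G m * x ^ β :=
      fun x => by ring
    simp_rw [hpt]
    rw [intervalIntegral.integral_add, intervalIntegral.integral_add,
      intervalIntegral.integral_const_mul, intervalIntegral.integral_const_mul]
    · ring
    · exact intervalIntegrable_rpow_mul hβ huv hrem
    · exact (intervalIntegrable_rpow_mul hβ huv hlin).const_mul _
    · exact (intervalIntegrable_rpow_mul hβ huv hrem).add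
        ((intervalIntegrable_rpow_mul hβ huv hlin).const_mul _)
    · exact (intervalIntegrable_rpow' hβ).const_mul _
  have hrem_bd := abs_integral_mul_taylor_remainder_le huv
    (fun x hx => Real.rpow_nonneg (hu.trans hx.1) β) (intervalIntegrable_rpow' hβ) hG htaylor hL
  have hmoment := midpoint_mul_abs_integral_rpow_mul_sub_le hβ hu huv
  rw [integral_rpow (Or.inl hβ)] at hrem_bd
  rw [hsplit]
  calc _ ≤ _ + |G'| * |∫ x in u..v, x ^ β * (x - m)| := by
        rw [← abs_mul]; exact abs_add_le _ _
    _ ≤ L * (v - u) ^ 2 / 4 * ((v ^ (β + 1) - u ^ (β + 1)) / (β + 1)) +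
        L * ((v - u) ^ 2 * (2 + 1 / (β + 1)) / 4 * (v ^ (β + 1) - u ^ (β + 1))) := by
      refine add_le_add hrem_bd ?_
      calc |G'| * |∫ x in u..v, x ^ β * (x - m)| ≤ L * m * |∫ x in u..v, x ^ β * (x - m)| :=
            mul_le_mul_of_nonneg_right hG' (abs_nonneg _)
        _ ≤ _ := by rw [mul_assoc]; exact mul_le_mul_of_nonneg_left hmoment hL
    _ = _ := by field_simp; ring

lemma abs_integral_rpow_mul_add_comp_neg_sub_le {s : Set ℝ} (hs : Convex ℝ s) {g g' : ℝ → ℝ}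
    {K : ℝ≥0} (hg : ∀ x ∈ s, HasDerivWithinAt g (g' x) s x) (hK : LipschitzOnWith K g' s)
    (hβ : -1 < β) (hu : 0 ≤ u) (huv : u ≤ v) (hsub : ∀ x ∈ Icc u v, x ∈ s ∧ -x ∈ s) :
    |(∫ x in u..v, x ^ β * (g x + g (-x))) -
        (∫ x in u..v, x ^ β) * (g ((u + v) / 2) + g (-((u + v) / 2)))| ≤
      2 * K * (v - u) ^ 2 * (1 + 1 / (β + 1)) / 2 * (v ^ (β + 1) - u ^ (β + 1)) := by
  have hm0 : 0 ≤ (u + v) / 2 := by linarith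
  have hm := hsub _ (⟨by linarith, by linarith⟩ : (u + v) / 2 ∈ Icc u v)
  set m := (u + v) / 2
  have hgc : ContinuousOn g s := fun x hx => (hg x hx).continuousWithinAt
  have hGc : ContinuousOn (fun x => g x + g (-x)) (Icc u v) :=
    (hgc.mono fun x hx => (hsub x hx).1).add (hgc.comp continuousOn_neg fun x hx => (hsub x hx).2)
  have hG' : |g' m - g' (-m)| ≤ 2 * K * m := by
    have := hK.dist_le_mul m hm.1 (-m) hm.2
    rw [Real.dist_eq, Real.dist_eq, sub_neg_eq_add, abs_of_nonneg (by linarith : 0 ≤ m + m)]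
      at this
    linarith
  exact abs_integral_rpow_mul_sub_le hβ hu huv hGc
    (fun x hx => abs_add_comp_neg_sub_sub_mul_le_of_lipschitzOnWith hs hg hK hm.1 hm.2
      (hsub x hx).1 (hsub x hx).2) hG' (by positivity)

end Midpoint

section Antiderivatives

lemma Real.sign_mul_abs_rpow_of_nonneg {t p : ℝ} (ht : 0 ≤ t) (hp : p ≠ 0) :
    Real.sign t * |t| ^ p = t ^ p := by
  rcases ht.eq_or_lt with rfl | ht
  · simp [Real.zero_rpow hp]
  · rw [Real.sign_of_pos ht, abs_of_pos ht, one_mul]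

lemma Real.sign_mul_abs_rpow_of_nonpos {t p : ℝ} (ht : t ≤ 0) (hp : p ≠ 0) :
    Real.sign t * |t| ^ p = -(-t) ^ p := by
  rcases ht.eq_or_lt with rfl | ht
  · simp [Real.zero_rpow hp]
  · rw [Real.sign_of_neg ht, abs_of_neg ht, neg_one_mul]

lemma integral_abs_rpow_of_mul_nonneg {r s t : ℝ} (hst : 0 ≤ s * t)
    (hr : -1 < r ∨ r ≠ -1 ∧ (0 : ℝ) ∉ [[s, t]]) :
    ∫ x in s..t, |x| ^ r =
      (Real.sign t * |t| ^ (r + 1) - Real.sign s * |s| ^ (r + 1)) / (r + 1) := by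
  have hr1 : r + 1 ≠ 0 := by
    rcases hr with hr | hr
    · linarith
    · exact fun h => hr.1 (by linarith)
  rcases mul_nonneg_iff.1 hst with ⟨hs, ht⟩ | ⟨hs, ht⟩
  · have hpos : ∀ x ∈ [[s, t]], |x| ^ r = x ^ r := fun x hx => by
      rw [abs_of_nonneg ((le_min hs ht).trans hx.1)]
    rw [integral_congr hpos, integral_rpow hr, Real.sign_mul_abs_rpow_of_nonneg hs hr1,
      Real.sign_mul_abs_rpow_of_nonneg ht hr1]
  · have hneg : ∀ x ∈ [[s, t]], |x| ^ r = (-x) ^ r := fun x hx => by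
      rw [abs_of_nonpos (hx.2.trans (max_le hs ht))]
    have hr' : -1 < r ∨ r ≠ -1 ∧ (0 : ℝ) ∉ [[-t, -s]] := by
      simpa [mem_uIcc, neg_nonneg, neg_nonpos, or_comm, and_comm] using hr
    rw [integral_congr hneg, integral_comp_neg (fun x => x ^ r), integral_rpow hr',
      Real.sign_mul_abs_rpow_of_nonpos hs hr1, Real.sign_mul_abs_rpow_of_nonpos ht hr1]
    ring

lemma integral_abs_sub_rpow {γ y s t : ℝ} (hγ : γ ≠ -1) (hy : y ∉ [[s, t]]) :
    ∫ x in s..t, |x - y| ^ γ =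
      (Real.sign (t - y) * |t - y| ^ (γ + 1) - Real.sign (s - y) * |s - y| ^ (γ + 1)) /
        (γ + 1) := by
  have h0 : (0 : ℝ) ∉ [[s - y, t - y]] := by
    simpa [mem_uIcc, sub_nonneg, sub_nonpos] using hy
  have hst : 0 ≤ (s - y) * (t - y) := by
    simp only [mem_uIcc, not_or, not_and_or, not_le] at h0
    rcases h0 with ⟨h1 | h1, h2 | h2⟩ <;> nlinarith
  rw [integral_comp_sub_right (fun x => |x| ^ γ)]
  exact integral_abs_rpow_of_mul_nonneg hst (Or.inr ⟨hγ, h0⟩)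

end Antiderivatives

section SymmetricCells

lemma sum_Icc_neg_eq_sum_range_add {M : Type*} [AddCommMonoid M] (F : ℤ → M) (N : ℕ) :
    ∑ n ∈ Finset.Icc (-(N : ℤ)) (N - 1), F n = ∑ k ∈ Finset.range N, (F k + F (-1 - k)) := by
  induction N with
  | zero => simp
  | succ N ih =>
    have hIcc : Finset.Icc (-((N + 1 : ℕ) : ℤ)) ((N + 1 : ℕ) - 1) =
        insert (-1 - (N : ℤ)) (insert (N : ℤ) (Finset.Icc (-(N : ℤ)) (N - 1))) := by
      ext x
      simp only [Finset.mem_Icc, Finset.mem_insert]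
      omega
    rw [hIcc, Finset.sum_insert (by simp; omega), Finset.sum_insert (by simp), ih,
      Finset.sum_range_succ]
    abel

lemma integral_symm_eq_sum_integral_add_comp_neg (F : ℝ → ℝ) {h : ℝ} (hh : 0 ≤ h) (N : ℕ)
    (hF : IntervalIntegrable F volume 0 (N * h))
    (hF' : IntervalIntegrable (fun x => F (-x)) volume 0 (N * h)) :
    ∫ x in -(N * h)..N * h, F x =
      ∑ k ∈ Finset.range N, ∫ x in k * h..(k + 1) * h, (F x + F (-x)) := by
  have hF'' : IntervalIntegrable F volume (-(N * h)) 0 := by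
    simpa using ((IntervalIntegrable.iff_comp_neg).1 hF').symm
  have hcell : ∀ j : ℕ, j ≤ N → (j : ℝ) * h ∈ [[0, N * h]] := fun j hj =>
    mem_uIcc_of_le (by positivity) (mul_le_mul_of_nonneg_right (by exact_mod_cast hj) hh)
  have hcells := sum_integral_adjacent_intervals (f := fun x => F x + F (-x))
    (a := fun k : ℕ => k * h) (n := N) fun k hk =>
      (hF.add hF').mono_set (uIcc_subset_uIcc (hcell k hk.le) (hcell (k + 1) hk))
  simp only [Nat.cast_succ, Nat.cast_zero, zero_mul] at hcells
  rw [hcells, intervalIntegral.integral_add hF hF', ← integral_add_adjacent_intervals hF'' hF,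
    integral_comp_neg, neg_zero, add_comm]

lemma integral_abs_rpow_mul_eq_sum {β h : ℝ} (hβ : -1 < β) (hh : 0 ≤ h) (N : ℕ) {F : ℝ → ℝ}
    (hF : ContinuousOn F (Icc (-(N * h)) (N * h))) :
    ∫ x in -(N * h)..N * h, |x| ^ β * F x =
      ∑ k ∈ Finset.range N, ∫ x in k * h..(k + 1) * h, x ^ β * (F x + F (-x)) := by
  have hNh : (0 : ℝ) ≤ N * h := by positivity
  have hpos : EqOn (fun x => x ^ β * F x) (fun x => |x| ^ β * F x) (uIoc 0 (N * h)) :=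
    fun x hx => by rw [uIoc_of_le hNh] at hx; simp only [abs_of_pos hx.1]
  have hpos' : EqOn (fun x => x ^ β * F (-x)) (fun x => |-x| ^ β * F (-x)) (uIoc 0 (N * h)) :=
    fun x hx => by rw [uIoc_of_le hNh] at hx; simp only [abs_neg, abs_of_pos hx.1]
  rw [integral_symm_eq_sum_integral_add_comp_neg _ hh N
    ((intervalIntegrable_rpow_mul hβ hNh (hF.mono (Icc_subset_Icc (by linarith) le_rfl))).congr
      hpos)
    ((intervalIntegrable_rpow_mul hβ hNh (hF.comp continuousOn_neg fun x hx =>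
      ⟨by linarith [hx.2], by linarith [hx.1]⟩)).congr hpos')]
  refine Finset.sum_congr rfl fun k _ => integral_congr fun x hx => ?_
  rw [uIcc_of_le (by nlinarith)] at hx
  have hx0 : 0 ≤ x := (by positivity : (0 : ℝ) ≤ k * h).trans hx.1
  simp only [abs_neg, abs_of_nonneg hx0]
  ring

lemma quadErrorSym_eq_integral_sub_sum {a β γ y : ℝ} {f : ℝ → ℝ} (ha : 0 < a) (hβ : -1 < β)
    (hγ : γ ≠ -1) (hy : y ∉ Icc (-a) a) {N : ℕ} (hN : N ≠ 0) :
    quadErrorSym a β γ y f N = (∫ x in (-a)..a, |x| ^ β * |x - y| ^ γ * f x) -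
      1 / (a / N) * ∑ n ∈ Finset.Icc (-(N : ℤ)) (N - 1),
        (∫ x in n * (a / N)..(n + 1) * (a / N), |x| ^ β) *
          (∫ x in n * (a / N)..(n + 1) * (a / N), |x - y| ^ γ) * f ((n + 1 / 2) * (a / N)) := by
  unfold quadErrorSym
  congr 2
  refine Finset.sum_congr rfl fun n hn => ?_
  set h := a / N with hh
  rw [Finset.mem_Icc] at hn
  have hn₁ : -(N : ℝ) ≤ n := by exact_mod_cast hn.1
  have hn₂ : (n : ℝ) + 1 ≤ N := by exact_mod_cast (by omega : n + 1 ≤ N)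
  have hNh : N * h = a := by rw [hh]; field_simp
  have hh0 : 0 < h := by positivity
  have hcell : [[(n : ℝ) * h, (n + 1) * h]] ⊆ Icc (-a) a := by
    rw [uIcc_of_le (by nlinarith), ← hNh]
    exact Icc_subset_Icc (by nlinarith) (by nlinarith)
  have hnn : (0 : ℤ) ≤ n * (n + 1) := by rcases le_or_gt 0 n with h0 | h0 <;> nlinarith
  have hsign : (0 : ℝ) ≤ n * h * ((n + 1) * h) := by
    rw [show (n : ℝ) * h * ((n + 1) * h) = (n * (n + 1) : ℤ) * h ^ 2 by push_cast; ring]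
    positivity
  rw [integral_abs_rpow_of_mul_nonneg hsign (Or.inl hβ),
    integral_abs_sub_rpow hγ fun hyn => hy (hcell hyn)]

/-- The error of the rule on the mirror cells `±[kh, (k+1)h]`, the left one reflected onto the
right one. -/
noncomputable def symmCellError (β h : ℝ) (w f : ℝ → ℝ) (k : ℕ) : ℝ :=
  (∫ x in k * h..(k + 1) * h, x ^ β * (w x * f x + w (-x) * f (-x))) -
    (∫ x in k * h..(k + 1) * h, x ^ β) *
      ((∫ x in k * h..(k + 1) * h, w x) / h * f ((k + 1 / 2) * h) +
        (∫ x in k * h..(k + 1) * h, w (-x)) / h * f (-((k + 1 / 2) * h)))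

lemma quadErrorSym_eq_sum_symmCellError {a β γ y : ℝ} {f : ℝ → ℝ} (ha : 0 < a) (hβ : -1 < β)
    (hγ : γ ≠ -1) (hy : y ∉ Icc (-a) a) (hf : ContinuousOn f (Icc (-a) a)) {N : ℕ}
    (hN : N ≠ 0) :
    quadErrorSym a β γ y f N =
      ∑ k ∈ Finset.range N, symmCellError β (a / N) (fun x => |x - y| ^ γ) f k := by
  rw [quadErrorSym_eq_integral_sub_sum ha hβ hγ hy hN, sum_Icc_neg_eq_sum_range_add]
  set h := a / N with hh
  have hNh : N * h = a := by rw [hh]; field_simp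
  have hsplit := integral_abs_rpow_mul_eq_sum hβ (by positivity : 0 ≤ h) N
    (F := fun x => |x - y| ^ γ * f x)
    (hNh ▸ (contDiffOn_abs_sub_rpow hy (n := 0)).continuousOn.mul hf)
  simp only [← mul_assoc, hNh] at hsplit
  rw [hsplit, Finset.mul_sum, ← Finset.sum_sub_distrib]
  refine Finset.sum_congr rfl fun k _ => ?_
  push_cast
  rw [show (-1 - (k : ℝ)) * h = -((k + 1) * h) by ring,
    show (-1 - (k : ℝ) + 1) * h = -(k * h) by ring,
    show (-1 - (k : ℝ) + 1 / 2) * h = -((k + 1 / 2) * h) by ring,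
    ← integral_comp_neg (fun x => |x| ^ β), ← integral_comp_neg (fun x => |x - y| ^ γ)]
  have hpos : ∀ x ∈ [[(k : ℝ) * h, (k + 1) * h]], |x| ^ β = x ^ β := fun x hx => by
    rw [uIcc_of_le (by nlinarith)] at hx
    rw [abs_of_nonneg ((by positivity : (0 : ℝ) ≤ k * h).trans hx.1)]
  simp only [abs_neg]
  rw [integral_congr hpos]
  unfold symmCellError
  ring

lemma abs_symmCellError_le {a β h M : ℝ} {w f w' g' : ℝ → ℝ} {Kw Kg : ℝ≥0} (hβ : -1 < β)
    (hh : 0 < h) {k : ℕ} (hk : (k + 1) * h ≤ a) (hf : ∀ x ∈ Icc (-a) a, |f x| ≤ M)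
    (hw : ∀ x ∈ Icc (-a) a, HasDerivWithinAt w (w' x) (Icc (-a) a) x)
    (hw' : LipschitzOnWith Kw w' (Icc (-a) a))
    (hg : ∀ x ∈ Icc (-a) a, HasDerivWithinAt (fun x => w x * f x) (g' x) (Icc (-a) a) x)
    (hg' : LipschitzOnWith Kg g' (Icc (-a) a)) :
    |symmCellError β h w f k| ≤ (Kg * (1 + 1 / (β + 1)) + M * Kw / (2 * (β + 1))) * h ^ 2 *
      (((k + 1) * h) ^ (β + 1) - (k * h) ^ (β + 1)) := by
  set u := (k : ℝ) * h
  set v := ((k : ℝ) + 1) * h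
  set m := ((k : ℝ) + 1 / 2) * h
  have hm : m = (u + v) / 2 := by ring
  have hvu : v - u = h := by ring
  have hu : 0 ≤ u := by positivity
  have huv : u ≤ v := by linarith
  have hβ1 : 0 < β + 1 := by linarith
  have hcell : ∀ x ∈ Icc u v, x ∈ Icc (-a) a ∧ -x ∈ Icc (-a) a := fun x hx =>
    ⟨⟨by linarith [hx.1], hx.2.trans hk⟩, ⟨by linarith [hx.2], by linarith [hx.1]⟩⟩
  have hmc := hcell m ⟨by linarith, by linarith⟩
  set G := fun x => w x * f x + w (-x) * f (-x)
  have hweighted := abs_integral_rpow_mul_add_comp_neg_sub_le (convex_Icc _ _) hg hg' hβ hu huv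
    hcell
  have hmid₁ := abs_sub_average_le_of_lipschitzOnWith (u := u) (v := v) hw hw' (by linarith)
    (by linarith) hk
  have hmid₂ := abs_sub_average_le_of_lipschitzOnWith (u := -v) (v := -u) hw hw' (by linarith)
    (by linarith) (by linarith)
  rw [← hm, hvu] at hmid₁
  rw [← integral_comp_neg w, show (-v + -u) / 2 = -m by rw [hm]; ring,
    show -u - -v = h by ring] at hmid₂
  have hweights : |G m - ((∫ x in u..v, w x) / h * f m + (∫ x in u..v, w (-x)) / h * f (-m))| ≤
      M * Kw * h ^ 2 / 2 := by
    calc _ = |(w m - (∫ x in u..v, w x) / h) * f m +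
          (w (-m) - (∫ x in u..v, w (-x)) / h) * f (-m)| := by congr 1; ring
      _ ≤ Kw * h ^ 2 / 4 * M + Kw * h ^ 2 / 4 * M := by
        refine (abs_add_le _ _).trans (add_le_add ?_ ?_) <;> rw [abs_mul]
        · exact mul_le_mul hmid₁ (hf m hmc.1) (abs_nonneg _) (by positivity)
        · exact mul_le_mul hmid₂ (hf (-m) hmc.2) (abs_nonneg _) (by positivity)
      _ = _ := by ring
  have hJ : ∫ x in u..v, x ^ β = (v ^ (β + 1) - u ^ (β + 1)) / (β + 1) :=
    integral_rpow (Or.inl hβ)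
  have hΔ : 0 ≤ v ^ (β + 1) - u ^ (β + 1) := sub_nonneg.2 (Real.rpow_le_rpow hu huv hβ1.le)
  calc |symmCellError β h w f k|
      = |((∫ x in u..v, x ^ β * G x) - (∫ x in u..v, x ^ β) * G m) + (∫ x in u..v, x ^ β) *
          (G m - ((∫ x in u..v, w x) / h * f m + (∫ x in u..v, w (-x)) / h * f (-m)))| := by
        unfold symmCellError; congr 1; ring
    _ ≤ 2 * Kg * (v - u) ^ 2 * (1 + 1 / (β + 1)) / 2 * (v ^ (β + 1) - u ^ (β + 1)) +
        (v ^ (β + 1) - u ^ (β + 1)) / (β + 1) * (M * Kw * h ^ 2 / 2) := by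
      refine (abs_add_le _ _).trans (add_le_add (hm ▸ hweighted) ?_)
      rw [abs_mul, hJ, abs_of_nonneg (by positivity)]
      exact mul_le_mul_of_nonneg_left hweights (by positivity)
    _ = _ := by rw [hvu]; field_simp

end SymmetricCells

theorem stmt16 (a β γ y : ℝ) (ha : 0 < a) (hβ : -1 < β) (hγ : γ ≠ -1)
    (hy : y ∉ Set.Icc (-a) a) (f : ℝ → ℝ) (hf : ContDiffOn ℝ 2 f (Set.Icc (-a) a)) :
    ∃ K : ℝ, 0 < K ∧ ∀ N : ℕ, 1 ≤ N →
      |quadErrorSym a β γ y f N| ≤ K / (N : ℝ) ^ 2 := by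
  have hw : ContDiffOn ℝ 2 (fun x => |x - y| ^ γ) (Icc (-a) a) := contDiffOn_abs_sub_rpow hy
  have hg := hw.mul hf
  have hderiv : ∀ {φ : ℝ → ℝ}, ContDiffOn ℝ 2 φ (Icc (-a) a) → ∀ x ∈ Icc (-a) a,
      HasDerivWithinAt φ (derivWithin φ (Icc (-a) a) x) (Icc (-a) a) x := fun hφ x hx =>
    (hφ.differentiableOn two_ne_zero x hx).hasDerivWithinAt
  obtain ⟨Kw, hKw⟩ := hw.exists_lipschitzOnWith_derivWithin_Icc (by linarith)
  obtain ⟨Kg, hKg⟩ := hg.exists_lipschitzOnWith_derivWithin_Icc (by linarith)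
  obtain ⟨M, hM⟩ := isCompact_Icc.exists_bound_of_continuousOn hf.continuousOn
  have hM0 : 0 ≤ M := (norm_nonneg _).trans (hM a ⟨by linarith, le_rfl⟩)
  set C := Kg * (1 + 1 / (β + 1)) + M * Kw / (2 * (β + 1))
  have hβ1 : 0 < β + 1 := by linarith
  refine ⟨C * a ^ (β + 3) + 1, by positivity, fun N hN => ?_⟩
  set h := a / N with hh
  have hNh : N * h = a := by rw [hh]; field_simp
  have htel := Finset.sum_range_sub (fun k : ℕ => ((k : ℝ) * h) ^ (β + 1)) N
  push_cast at htel
  have hpow : a ^ (β + 3) = a ^ (β + 1) * a ^ 2 := by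
    rw [show β + 3 = (β + 1) + (2 : ℕ) by push_cast; ring, Real.rpow_add_natCast ha.ne']
  rw [quadErrorSym_eq_sum_symmCellError ha hβ hγ hy hf.continuousOn (by omega)]
  calc _ ≤ ∑ k ∈ Finset.range N, |symmCellError β h (fun x => |x - y| ^ γ) f k| :=
        Finset.abs_sum_le_sum_abs _ _
    _ ≤ ∑ k ∈ Finset.range N, C * h ^ 2 * (((k + 1) * h) ^ (β + 1) - (k * h) ^ (β + 1)) := by
      refine Finset.sum_le_sum fun k hk => abs_symmCellError_le hβ (by positivity) ?_
        (fun x hx => by simpa using hM x hx) (hderiv hw) hKw (hderiv hg) hKg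
      rw [← hNh]
      exact mul_le_mul_of_nonneg_right (by exact_mod_cast Finset.mem_range.1 hk) (by positivity)
    _ = C * a ^ (β + 3) / N ^ 2 := by
      rw [← Finset.mul_sum, htel, hNh, zero_mul, Real.zero_rpow hβ1.ne', sub_zero, hh, hpow]
      field_simp
    _ ≤ _ := by gcongr; linarith
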